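/- For every state s of A_strong in the set {p_a, p_b, p_c, p'_a, p'_b, p'_c, q_a, q_b, q_c, q'_a, q'_b, q'_c, Y} (the good states of A_strong), let B_s be the Büchi automaton obtained from A_strong by removing the transition (Y,y,I) and adding the significant transition (Y,y,s). Then L(B_s) ≠ L_strong. -/

import Mathlib

/-- A (nondeterministic) Büchi/coBüchi automaton: an initial state, a set of
transitions, and a subset of *significant* transitions. -/
structure BuchiAutomaton (σ : Type) (Q : Type) where
  init : Q
  trans : Set (Q × σ × Q)
  sig : Set (Q × σ × Q)
  sig_sub : sig ⊆ trans

namespace BuchiAutomaton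

variable {σ Q : Type}

/-- `ρ` is a run of `A` on the infinite word `w`, starting at the state `p`. -/
def IsRunFrom (A : BuchiAutomaton σ Q) (p : Q) (w : ℕ → σ) (ρ : ℕ → Q) : Prop :=
  ρ 0 = p ∧ ∀ i, (ρ i, w i, ρ (i + 1)) ∈ A.trans

/-- Büchi acceptance: the run contains infinitely many significant transitions. -/
def BuchiAcc (A : BuchiAutomaton σ Q) (w : ℕ → σ) (ρ : ℕ → Q) : Prop :=
  ∀ N, ∃ i, N ≤ i ∧ (ρ i, w i, ρ (i + 1)) ∈ A.sig

/-- coBüchi acceptance: the run contains finitely many significant transitions. -/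
def CoBuchiAcc (A : BuchiAutomaton σ Q) (w : ℕ → σ) (ρ : ℕ → Q) : Prop :=
  ∃ N, ∀ i, N ≤ i → (ρ i, w i, ρ (i + 1)) ∉ A.sig

/-- The language of `A` (as a Büchi automaton), with initial state `p`. -/
def LangFrom (A : BuchiAutomaton σ Q) (p : Q) : Set (ℕ → σ) :=
  {w | ∃ ρ, A.IsRunFrom p w ρ ∧ A.BuchiAcc w ρ}

/-- The language of `A`, read as a Büchi automaton. -/
def Lang (A : BuchiAutomaton σ Q) : Set (ℕ → σ) :=
  A.LangFrom A.init

/-- The language of `A`, read as a coBüchi automaton. -/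
def CoLang (A : BuchiAutomaton σ Q) : Set (ℕ → σ) :=
  {w | ∃ ρ, A.IsRunFrom A.init w ρ ∧ A.CoBuchiAcc w ρ}

/-- `A` is deterministic: at most one outgoing transition per state and letter. -/
def Deterministic (A : BuchiAutomaton σ Q) : Prop :=
  ∀ p a q q', (p, a, q) ∈ A.trans → (p, a, q') ∈ A.trans → q = q'

/-- `FinRun A l p`: `l` is a finite run of `A` from the initial state, ending in
the state `p` (represented as the chronological list of its transitions). -/
inductive FinRun (A : BuchiAutomaton σ Q) : List (Q × σ × Q) → Q → Prop
  | nil : FinRun A [] A.init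
  | snoc {l : List (Q × σ × Q)} {p : Q} {a : σ} {q : Q} :
      FinRun A l p → (p, a, q) ∈ A.trans → FinRun A (l ++ [(p, a, q)]) q

/-- A resolver for `A`: a function from finite runs and letters to transitions,
such that on every finite run from the initial state ending in a state `p` and
every letter `a`, it outputs a transition on `a` with source `p`. -/
structure Resolver (A : BuchiAutomaton σ Q) where
  res : List (Q × σ × Q) → σ → Q × σ × Q
  res_valid : ∀ l p a, A.FinRun l p →
    (res l a).1 = p ∧ (res l a).2.1 = a ∧ res l a ∈ A.trans

/-- The history (finite run) built by a resolver after reading `n` letters of `w`. -/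
def Resolver.hist {A : BuchiAutomaton σ Q} (r : Resolver A) (w : ℕ → σ) : ℕ → List (Q × σ × Q)
  | 0 => []
  | n + 1 => r.hist w n ++ [r.res (r.hist w n) (w n)]

/-- The run induced by the resolver on `w` satisfies the Büchi condition. -/
def Resolver.InducedBuchiAcc {A : BuchiAutomaton σ Q} (r : Resolver A) (w : ℕ → σ) : Prop :=
  ∀ N, ∃ n, N ≤ n ∧ r.res (r.hist w n) (w n) ∈ A.sig

/-- The run induced by the resolver on `w` satisfies the coBüchi condition. -/
def Resolver.InducedCoBuchiAcc {A : BuchiAutomaton σ Q} (r : Resolver A) (w : ℕ → σ) : Prop :=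
  ∃ N, ∀ n, N ≤ n → r.res (r.hist w n) (w n) ∉ A.sig

/-- `A` is history-deterministic (as a Büchi automaton). -/
def HistoryDeterministic (A : BuchiAutomaton σ Q) : Prop :=
  ∃ r : Resolver A, ∀ w ∈ A.Lang, r.InducedBuchiAcc w

/-- `A` is history-deterministic (as a coBüchi automaton). -/
def CoHistoryDeterministic (A : BuchiAutomaton σ Q) : Prop :=
  ∃ r : Resolver A, ∀ w ∈ A.CoLang, r.InducedCoBuchiAcc w

end BuchiAutomaton

/-- The finite factor `w[m..n)` of the infinite word `w`, as a list. -/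
def wordSegment {σ : Type} (w : ℕ → σ) (m n : ℕ) : List σ :=
  (List.range (n - m)).map fun i => w (m + i)

/-- `omegaPow X`: the infinite words that can be written as an infinite
concatenation of finite words, each belonging to `X`. -/
def omegaPow {σ : Type} (X : Set (List σ)) : Set (ℕ → σ) :=
  {w | ∃ φ : ℕ → ℕ, φ 0 = 0 ∧ StrictMono φ ∧ ∀ k, wordSegment w (φ k) (φ (k + 1)) ∈ X}

/-- The index set `{a, b, c}`. -/
inductive ABC : Type
  | a | b | c
deriving DecidableEq

instance instFintypeABC : Fintype ABC :=
  ⟨{ABC.a, ABC.b, ABC.c}, fun x => by cases x <;> simp⟩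

/-- The alphabet `Σ = {a, b, c, x, y}`. -/
inductive Sig5 : Type
  | la | lb | lc | lx | ly
deriving DecidableEq

instance instFintypeSig5 : Fintype Sig5 :=
  ⟨{Sig5.la, Sig5.lb, Sig5.lc, Sig5.lx, Sig5.ly}, fun x => by cases x <;> simp⟩

/-- The letter associated with an index in `{a, b, c}`. -/
def ABC.tolet : ABC → Sig5
  | .a => .la
  | .b => .lb
  | .c => .lc

/-- Finite words over `{x, y}` (the language `(x^*y^*)^*`). -/
def XYword : Set (List Sig5) := {u | ∀ l ∈ u, l = Sig5.lx ∨ l = Sig5.ly}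

/-- The language `L_α = (x^*y^*)^* x α` of finite words. -/
def Lfin (α : ABC) : Set (List Sig5) :=
  {w | ∃ u ∈ XYword, w = u ++ [Sig5.lx, α.tolet]}

/-- `L_strong = (Σ^* ⋃_{α≠β} L_α L_β L_β Σ^* y)^ω`. -/
def LStrong : Set (ℕ → Sig5) :=
  omegaPow {w | ∃ α β : ABC, α ≠ β ∧ ∃ u v₁ v₂ v₃ z : List Sig5,
    v₁ ∈ Lfin α ∧ v₂ ∈ Lfin β ∧ v₃ ∈ Lfin β ∧
    w = u ++ v₁ ++ v₂ ++ v₃ ++ z ++ [Sig5.ly]}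

/-- The 17 states of the automaton `A_strong`. -/
inductive St17 : Type
  | I
  | io (α : ABC)
  | p (α : ABC)
  | p' (α : ABC)
  | q (α : ABC)
  | q' (α : ABC)
  | Y
deriving DecidableEq

open Sig5 in
/-- The significant transitions of `A_strong`. -/
def strongSig : Set (St17 × Sig5 × St17) :=
  {t | (∃ α : ABC, t = (.io α, α.tolet, .p α)) ∨
       (∃ α β : ABC, α ≠ β ∧ t = (.p' α, β.tolet, .q β)) ∨
       (∃ α : ABC, t = (.q' α, α.tolet, .Y)) ∨
       t = (.Y, ly, .I)}

open Sig5 in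
/-- The non-significant transitions of `A_strong`. -/
def strongNonsig : Set (St17 × Sig5 × St17) :=
  {t | (∃ l ∈ [ly, la, lb, lc], t = (.I, l, .I)) ∨
       (∃ α : ABC, t = (.I, lx, .io α)) ∨
       (∃ α : ABC, t = (.io α, lx, .io α)) ∨
       (∃ α β : ABC, α ≠ β ∧ t = (.io α, β.tolet, .I)) ∨
       (∃ α : ABC, ∃ l ∈ [ly, la, lb, lc], t = (.p α, l, .p α)) ∨
       (∃ α : ABC, t = (.p α, lx, .p' α)) ∨
       (∃ α : ABC, t = (.p' α, lx, .p' α)) ∨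
       (∃ α : ABC, t = (.p' α, α.tolet, .p α)) ∨
       (∃ α : ABC, t = (.p' α, ly, .p α)) ∨
       (∃ α : ABC, ∃ l ∈ [ly, la, lb, lc], t = (.q α, l, .q α)) ∨
       (∃ α : ABC, t = (.q α, lx, .q' α)) ∨
       (∃ α : ABC, t = (.q' α, lx, .q' α)) ∨
       (∃ α : ABC, t = (.q' α, ly, .q α)) ∨
       (∃ α β : ABC, α ≠ β ∧ t = (.q' α, β.tolet, .q β)) ∨
       (∃ l ∈ [lx, la, lb, lc], t = (.Y, l, .Y))}

/-- The Büchi automaton `A_strong`. -/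
def Astrong : BuchiAutomaton Sig5 St17 where
  init := .I
  trans := strongSig ∪ strongNonsig
  sig := strongSig
  sig_sub := Set.subset_union_left

/-- The good states of `A_strong`:
`{p_a, p_b, p_c, p'_a, p'_b, p'_c, q_a, q_b, q_c, q'_a, q'_b, q'_c, Y}`. -/
def strongGood : Set St17 :=
  {s | (∃ α : ABC, s = .p α ∨ s = .p' α ∨ s = .q α ∨ s = .q' α) ∨ s = .Y}

/-- The automaton obtained from `A_strong` by removing the transition `(Y, y, I)`
and adding the significant transition `(Y, y, s)`. -/
def Bstrong (s : St17) : BuchiAutomaton Sig5 St17 where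
  init := .I
  trans := (Astrong.trans \ {(.Y, .ly, .I)}) ∪ {(.Y, .ly, s)}
  sig := (Astrong.sig \ {(.Y, .ly, .I)}) ∪ {(.Y, .ly, s)}
  sig_sub := by
    rintro t (⟨h1, h2⟩ | h)
    · exact Or.inl ⟨Astrong.sig_sub h1, h2⟩
    · exact Or.inr h

/-!
Reading `xaxbxb`, the automaton `B_s` moves from `I` to `Y` as `A_strong` does. From `Y` it can
then cycle forever along `Y --y--> s --v--> Y`, where `v` contains only one letter `γ` of
`{a, b, c}`. Each lap passes the significant transition `(Y, y, s)`, so `B_s` accepts the lasso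
word `xaxbxb (y v)^ω`. But every block of a factorisation witnessing `L_strong` contains two
distinct letters of `{a, b, c}`, while from position 6 on the lasso word contains no letter of
`{a, b, c}` other than `γ`.
-/

namespace Stream'

variable {α : Type*}

theorem get_cycle (l : List α) (h : l ≠ []) (n : ℕ) :
    (cycle l h).get n = l[n % l.length]'(Nat.mod_lt _ (List.length_pos_iff.mpr h)) := by
  induction n using Nat.strong_induction_on with
  | _ n ih =>
    rw [cycle_eq]
    rcases lt_or_ge n l.length with hn | hn
    · rw [get_append_left _ _ _ hn]
      simp only [Nat.mod_eq_of_lt hn]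
    · obtain ⟨n, rfl⟩ := Nat.exists_eq_add_of_le hn
      rw [get_append_right, ih n (by have := List.length_pos_iff.mpr h; omega)]
      simp only [Nat.add_mod_left]

theorem get_append_cycle_add_length {l c : List α} (hc : c ≠ []) {n : ℕ} (hn : l.length ≤ n) :
    (l ++ₛ cycle c hc).get (n + c.length) = (l ++ₛ cycle c hc).get n := by
  obtain ⟨n, rfl⟩ := Nat.exists_eq_add_of_le hn
  rw [Nat.add_assoc, get_append_right, get_append_right, get_cycle, get_cycle]
  simp only [Nat.add_mod_right]

theorem get_append_cycle_mem {l c : List α} (hc : c ≠ []) {n : ℕ} (hn : l.length ≤ n) :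
    (l ++ₛ cycle c hc).get n ∈ c := by
  obtain ⟨n, rfl⟩ := Nat.exists_eq_add_of_le hn
  rw [get_append_right, get_cycle]
  exact List.getElem_mem _

end Stream'

namespace BuchiAutomaton

variable {σ Q : Type} (A : BuchiAutomaton σ Q)

theorem mem_lang_of_eventually_periodic {w : ℕ → σ} {ρ : ℕ → Q} {m k : ℕ} (hk : 0 < k)
    (hρ₀ : ρ 0 = A.init) (hw : ∀ n ≥ m, w (n + k) = w n) (hρ : ∀ n ≥ m, ρ (n + k) = ρ n)
    (htrans : ∀ n < m + k, (ρ n, w n, ρ (n + 1)) ∈ A.trans)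
    (hsig : ∃ n ≥ m, (ρ n, w n, ρ (n + 1)) ∈ A.sig) :
    w ∈ A.Lang := by
  set t : ℕ → Q × σ × Q := fun n => (ρ n, w n, ρ (n + 1)) with ht
  have hper : ∀ n ≥ m, t (n + k) = t n := fun n hn => by
    simp only [ht, Nat.add_right_comm n k 1, hw n hn, hρ n hn, hρ (n + 1) (by omega)]
  have hper_mul : ∀ n ≥ m, ∀ j, t (n + j * k) = t n := fun n hn j => by
    induction j with
    | zero => simp
    | succ j ih => rw [Nat.succ_mul, ← Nat.add_assoc, hper _ (by omega), ih]
  refine ⟨ρ, ⟨hρ₀, fun n => ?_⟩, fun N => ?_⟩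
  · induction n using Nat.strong_induction_on with
    | _ n ih =>
      rcases lt_or_ge n (m + k) with hn | hn
      · exact htrans n hn
      · have h := hper (n - k) (by omega)
        rw [Nat.sub_add_cancel (by omega)] at h
        change t n ∈ A.trans
        rw [h]
        exact ih _ (by omega)
  · obtain ⟨n, hn, hsig⟩ := hsig
    refine ⟨n + N * k, le_add_left (Nat.le_mul_of_pos_right N hk), ?_⟩
    change t (n + N * k) ∈ A.sig
    rwa [hper_mul n hn]

end BuchiAutomaton

open Sig5 St17

instance (t : St17 × Sig5 × St17) : Decidable (t ∈ strongSig) := by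
  unfold strongSig; infer_instance

set_option synthInstance.maxSize 2000 in
instance (t : St17 × Sig5 × St17) : Decidable (t ∈ strongNonsig) := by
  unfold strongNonsig; infer_instance

instance (s : St17) (t : St17 × Sig5 × St17) : Decidable (t ∈ (Bstrong s).trans) :=
  inferInstanceAs (Decidable ((t ∈ strongSig ∪ strongNonsig ∧ t ∉ {(Y, ly, I)}) ∨ t = (Y, ly, s)))

theorem ABC.eq_of_tolet_eq_or_xy {α γ : ABC} (h : γ.tolet = α.tolet ∨ γ.tolet = lx ∨ γ.tolet = ly) :
    γ = α := by
  revert h; cases γ <;> cases α <;> decide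

theorem notMem_LStrong_of_eventually_one_abc_letter {w : ℕ → Sig5} (α : ABC) (N : ℕ)
    (h : ∀ n ≥ N, w n = α.tolet ∨ w n = lx ∨ w n = ly) : w ∉ LStrong := by
  rintro ⟨φ, -, hφ, hblock⟩
  obtain ⟨γ, δ, hγδ, u, v₁, v₂, v₃, z, ⟨u₁, -, rfl⟩, ⟨u₂, -, rfl⟩, -, hseg⟩ := hblock N
  have hlate : ∀ l ∈ wordSegment w (φ N) (φ (N + 1)), l = α.tolet ∨ l = lx ∨ l = ly := by
    intro l hl
    obtain ⟨i, -, rfl⟩ := List.mem_map.mp hl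
    exact h _ (hφ.le_apply.trans (Nat.le_add_right _ _))
  have hγ : γ = α := ABC.eq_of_tolet_eq_or_xy (hlate _ (by rw [hseg]; simp))
  have hδ : δ = α := ABC.eq_of_tolet_eq_or_xy (hlate _ (by rw [hseg]; simp))
  exact hγδ (hγ.trans hδ.symm)

def lassoWord (v : List Sig5) : ℕ → Sig5 :=
  ([lx, la, lx, lb, lx, lb] ++ₛ Stream'.cycle (ly :: v) (List.cons_ne_nil _ _)).get

def lassoRun (c : List St17) : ℕ → St17 :=
  ([I, io .a, p .a, p' .a, q .b, q' .b] ++ₛ Stream'.cycle (Y :: c) (List.cons_ne_nil _ _)).get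

/-- `lassoRun c` is a run of `B_s` on `lassoWord v`: the prefix `xaxbxb` leads from `I` to `Y`
(position 6), and the cycle `Y --y--> s --v--> Y` passes through the states `Y :: c`. -/
def IsLassoWitness (s : St17) (γ : ABC) (v : List Sig5) (c : List St17) : Prop :=
  c.length = v.length ∧ lassoRun c 7 = s ∧ (∀ l ∈ v, l = γ.tolet ∨ l = lx ∨ l = ly) ∧
    ∀ n < 7 + v.length, (lassoRun c n, lassoWord v n, lassoRun c (n + 1)) ∈ (Bstrong s).trans

instance (s : St17) (γ : ABC) (v : List Sig5) (c : List St17) :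
    Decidable (IsLassoWitness s γ v c) := by
  unfold IsLassoWitness; infer_instance

theorem lassoWord_mem_lang {s : St17} {γ : ABC} {v : List Sig5} {c : List St17}
    (h : IsLassoWitness s γ v c) : lassoWord v ∈ (Bstrong s).Lang := by
  obtain ⟨hlen, hs, -, htrans⟩ := h
  have hk : (Y :: c).length = v.length + 1 := by simp [hlen]
  refine (Bstrong s).mem_lang_of_eventually_periodic (m := 6) (k := v.length + 1)
    v.length.succ_pos rfl
    (fun n hn => Stream'.get_append_cycle_add_length (l := [lx, la, lx, lb, lx, lb]) _ hn)
    (fun n hn => hk ▸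
      Stream'.get_append_cycle_add_length (l := [I, io .a, p .a, p' .a, q .b, q' .b]) _ hn)
    (fun n hn => htrans n (by omega)) ⟨6, le_rfl, Or.inr ?_⟩
  rw [hs]
  rfl

theorem lassoWord_notMem_LStrong {γ : ABC} {v : List Sig5}
    (hv : ∀ l ∈ v, l = γ.tolet ∨ l = lx ∨ l = ly) : lassoWord v ∉ LStrong := by
  refine notMem_LStrong_of_eventually_one_abc_letter γ 6 fun n hn => ?_
  have hmem :=
    Stream'.get_append_cycle_mem (l := [lx, la, lx, lb, lx, lb]) (List.cons_ne_nil ly v) hn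
  rcases List.mem_cons.mp hmem with h | h
  · exact Or.inr (Or.inr h)
  · exact hv _ h

def ABC.next : ABC → ABC
  | .a => .b
  | .b => .c
  | .c => .a

theorem exists_isLassoWitness {s : St17} (hs : s ∈ strongGood) :
    ∃ γ v c, IsLassoWitness s γ v c := by
  rcases hs with ⟨α, rfl | rfl | rfl | rfl⟩ | rfl
  · exact ⟨α.next, [lx, α.next.tolet, lx, α.next.tolet], [p α, p' α, q α.next, q' α.next],
      by cases α <;> decide⟩
  · exact ⟨α.next, [α.next.tolet, lx, α.next.tolet], [p' α, q α.next, q' α.next],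
      by cases α <;> decide⟩
  · exact ⟨α, [lx, α.tolet], [q α, q' α], by cases α <;> decide⟩
  · exact ⟨α, [α.tolet], [q' α], by cases α <;> decide⟩
  · exact ⟨.a, [], [], by decide⟩

/-- For every good state `s` of `A_strong`, redirecting the
transition `(Y, y, I)` to a significant transition `(Y, y, s)` changes the
language: `L(B_s) ≠ L_strong`. -/
theorem Bstrong_lang_ne_LStrong :
    ∀ s ∈ strongGood, (Bstrong s).Lang ≠ LStrong := by
  intro s hs hlang
  obtain ⟨γ, v, c, h⟩ := exists_isLassoWitness hs
  exact lassoWord_notMem_LStrong h.2.2.1 (hlang ▸ lassoWord_mem_lang h)
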